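/- Let (X,d) be a metric space satisfying the ⊠-inequalities and let x,y,z,w ∈ X be four distinct points such that {x,y,z,w} is over-distance with respect to {y,w}. Then the comparison angles satisfy ∠̃yxz + ∠̃zxw > π or ∠̃yzx + ∠̃xzw > π. -/

import Mathlib

noncomputable section

/-- A metric space satisfies the ⊠-inequalities. -/
def BoxIneq (X : Type*) [MetricSpace X] : Prop :=
  ∀ t ∈ Set.Icc (0:ℝ) 1, ∀ s ∈ Set.Icc (0:ℝ) 1, ∀ x y z w : X,
    0 ≤ (1 - t) * (1 - s) * dist x y ^ 2 + t * (1 - s) * dist y z ^ 2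
      + t * s * dist z w ^ 2 + (1 - t) * s * dist w x ^ 2
      - t * (1 - t) * dist x z ^ 2 - s * (1 - s) * dist y w ^ 2

/-- `{x,y,z,w}` is over-distance with respect to `{y,w}`. -/
def OverDistance {X : Type*} [MetricSpace X] (x y z w : X) : Prop :=
  ∀ x' y' z' w' : EuclideanSpace ℝ (Fin 3),
    dist x' y' = dist x y → dist y' z' = dist y z → dist z' x' = dist z x →
    dist x' w' = dist x w → dist w' z' = dist w z →
    dist y' w' < dist y w

/-- The comparison angle `∠̃abc` at `b`, computed by the law of cosines. -/
def compAngle {X : Type*} [MetricSpace X] (a b c : X) : ℝ :=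
  Real.arccos ((dist b a ^ 2 + dist b c ^ 2 - dist a c ^ 2) / (2 * dist b a * dist b c))

/-!
Suppose both angle sums are at most `π`. Place comparison triangles for `x y z` and `x w z` in
a plane, on opposite sides of their common side `x'z'`. The two angle conditions say that the
quadrilateral `x'y'z'w'` has no reflex angle at `x'` or `z'`, so the diagonal `y'w'` meets the
segment `x'z'`. In an inner product space the ⊠-expression at `(t, s)` is
`‖(1 - s) y' + s w' - (1 - t) x' - t z'‖²`, which vanishes at the crossing. Over-distance makes
`d(y, w)` larger than `‖y' - w'‖`, which lowers the ⊠-expression of `x, y, z, w` by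
`s (1 - s) (d(y, w)² - ‖y' - w'‖²)` and makes it negative for some `s ∈ (0, 1)` near the crossing.
-/

open Set Real

def boxExpr {X : Type*} [MetricSpace X] (t s : ℝ) (x y z w : X) : ℝ :=
  (1 - t) * (1 - s) * dist x y ^ 2 + t * (1 - s) * dist y z ^ 2
    + t * s * dist z w ^ 2 + (1 - t) * s * dist w x ^ 2
    - t * (1 - t) * dist x z ^ 2 - s * (1 - s) * dist y w ^ 2

theorem boxExpr_eq_norm_sq {E : Type*} [NormedAddCommGroup E] [InnerProductSpace ℝ E]
    (t s : ℝ) (x y z w : E) :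
    boxExpr t s x y z w = ‖(1 - s) • y + s • w - ((1 - t) • x + t • z)‖ ^ 2 := by
  simp only [boxExpr, dist_eq_norm, ← real_inner_self_eq_norm_sq]
  simp only [inner_sub_left, inner_sub_right, inner_add_left, inner_add_right,
    real_inner_smul_left, real_inner_smul_right]
  rw [real_inner_comm x y, real_inner_comm x z, real_inner_comm x w, real_inner_comm y z,
    real_inner_comm y w, real_inner_comm z w]
  ring

theorem exists_mem_Ioo_sq_mul_lt {s₀ L D : ℝ} (hs₀ : s₀ ∈ Icc 0 1) (hL : 0 ≤ L) (hD : 0 < D) :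
    ∃ s ∈ Ioo 0 1, (s - s₀) ^ 2 * L < s * (1 - s) * D := by
  obtain ⟨h0, h1⟩ := hs₀
  set ε := D / (L + D)
  have hε : 0 < ε := by positivity
  have hε1 : ε ≤ 1 := (div_le_one (by positivity)).2 (by linarith)
  have hεL : ε * L < D := by
    rw [div_mul_eq_mul_div, div_lt_iff₀ (by positivity)]; nlinarith
  have hu : (s₀ - 1 / 2) ^ 2 ≤ 1 / 4 := by nlinarith
  refine ⟨s₀ + ε * (1 / 2 - s₀), ⟨by nlinarith, by nlinarith⟩, ?_⟩
  calc (s₀ + ε * (1 / 2 - s₀) - s₀) ^ 2 * L = ε ^ 2 * (s₀ - 1 / 2) ^ 2 * L := by ring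
    _ ≤ ε ^ 2 / 4 * L := by gcongr; nlinarith
    _ < ε / 4 * D := by nlinarith
    _ ≤ (1 / 4 - (1 - ε) ^ 2 * (s₀ - 1 / 2) ^ 2) * D := by gcongr; nlinarith
    _ = _ := by ring

theorem BoxIneq.dist_le_of_segment_inter_nonempty {X E : Type*} [MetricSpace X]
    [NormedAddCommGroup E] [InnerProductSpace ℝ E] (hX : BoxIneq X) {x y z w : X}
    {x' y' z' w' : E} (hxy : dist x' y' = dist x y) (hyz : dist y' z' = dist y z)
    (hzx : dist z' x' = dist z x) (hxw : dist x' w' = dist x w) (hwz : dist w' z' = dist w z)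
    (hcross : (segment ℝ y' w' ∩ segment ℝ x' z').Nonempty) :
    dist y w ≤ dist y' w' := by
  obtain ⟨p, hpyw, hpxz⟩ := hcross
  rw [segment_eq_image] at hpyw hpxz
  obtain ⟨s₀, hs₀, rfl⟩ := hpyw
  obtain ⟨t, ht, hp⟩ := hpxz
  by_contra! hlt
  obtain ⟨s, hs, hneg⟩ := exists_mem_Ioo_sq_mul_lt hs₀ (sq_nonneg (dist y' w'))
    (D := dist y w ^ 2 - dist y' w' ^ 2) (by nlinarith [dist_nonneg (x := y') (y := w')])
  have hbox : 0 ≤ boxExpr t s x y z w := hX t ht s (Ioo_subset_Icc_self hs) x y z w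
  have hzw : dist z' w' = dist z w := by rw [dist_comm, hwz, dist_comm]
  have hwx : dist w' x' = dist w x := by rw [dist_comm, hxw, dist_comm]
  have hxz : dist x' z' = dist x z := by rw [dist_comm, hzx, dist_comm]
  have hbox_eq : boxExpr t s x y z w
      = boxExpr t s x' y' z' w' - s * (1 - s) * (dist y w ^ 2 - dist y' w' ^ 2) := by
    simp only [boxExpr, hxy, hyz, hzw, hwx, hxz]
    ring
  have hmodel : boxExpr t s x' y' z' w' = (s - s₀) ^ 2 * dist y' w' ^ 2 := by
    dsimp only at hp
    rw [boxExpr_eq_norm_sq, hp, dist_eq_norm',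
      show (1 - s) • y' + s • w' - ((1 - s₀) • y' + s₀ • w') = (s - s₀) • (w' - y') by module,
      norm_smul, mul_pow, Real.norm_eq_abs, sq_abs]
  linarith

section CompAngle

variable {X : Type*} [MetricSpace X]

theorem compAngle_comm (a b c : X) : compAngle a b c = compAngle c b a := by
  simp only [compAngle, dist_comm a c, add_comm (dist b a ^ 2), mul_assoc, mul_comm (dist b a)]

theorem compAngle_nonneg (a b c : X) : 0 ≤ compAngle a b c := arccos_nonneg _

theorem sin_compAngle_nonneg (a b c : X) : 0 ≤ sin (compAngle a b c) :=
  sin_nonneg_of_nonneg_of_le_pi (arccos_nonneg _) (arccos_le_pi _)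

theorem cos_compAngle {a b c : X} (hab : a ≠ b) (hcb : c ≠ b) :
    cos (compAngle a b c)
      = (dist b a ^ 2 + dist b c ^ 2 - dist a c ^ 2) / (2 * dist b a * dist b c) := by
  have hba : 0 < dist b a := dist_pos.2 hab.symm
  have hbc : 0 < dist b c := dist_pos.2 hcb.symm
  have hle : dist a c ≤ dist b a + dist b c := dist_comm a b ▸ dist_triangle a b c
  have hge : |dist b a - dist b c| ≤ dist a c := by
    simpa only [dist_comm b] using abs_dist_sub_le a c b
  rw [abs_le] at hge
  apply cos_arccos
  · rw [le_div_iff₀ (by positivity)]; nlinarith [dist_nonneg (x := a) (y := c)]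
  · rw [div_le_one (by positivity)]; nlinarith [dist_nonneg (x := a) (y := c)]

theorem dist_mul_cos_compAngle_add_dist_mul_cos_compAngle {x y z : X} (hxy : x ≠ y)
    (hxz : x ≠ z) (hyz : y ≠ z) :
    dist x y * cos (compAngle y x z) + dist y z * cos (compAngle y z x) = dist x z := by
  have hxy' : 0 < dist x y := dist_pos.2 hxy
  have hyz' : 0 < dist y z := dist_pos.2 hyz
  have hxz' : 0 < dist x z := dist_pos.2 hxz
  rw [cos_compAngle hxy.symm hxz.symm, cos_compAngle hyz hxz, dist_comm z y, dist_comm z x,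
    dist_comm y x]
  field_simp
  ring

theorem dist_mul_sin_compAngle_eq {x y z : X} (hxy : x ≠ y) (hxz : x ≠ z) (hyz : y ≠ z) :
    dist y z * sin (compAngle y z x) = dist x y * sin (compAngle y x z) := by
  have hxy' : 0 < dist x y := dist_pos.2 hxy
  have hxz' : 0 < dist x z := dist_pos.2 hxz
  have hproj := dist_mul_cos_compAngle_add_dist_mul_cos_compAngle hxy hxz hyz
  have hcos := cos_compAngle hxy.symm hxz.symm
  rw [← sq_eq_sq₀ (mul_nonneg dist_nonneg (sin_compAngle_nonneg ..))
    (mul_nonneg dist_nonneg (sin_compAngle_nonneg ..)), mul_pow, mul_pow, sin_sq, sin_sq]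
  field_simp at hcos
  linear_combination hcos
    - (dist y z * cos (compAngle y z x) + dist x z - dist x y * cos (compAngle y x z)) * hproj

end CompAngle

/-- `hx` and `hz` put `(0, 0)` and `(c, 0)` on opposite sides of the line through `(y₁, y₂)` and
`(w₁, w₂)`; `hx'` and `hz'` matter only when all four points lie on the axis. -/
theorem exists_crossing_of_opposite_sides {y₁ y₂ w₁ w₂ c : ℝ} (hc : 0 ≤ c) (hy₂ : 0 ≤ y₂)
    (hw₂ : w₂ ≤ 0) (hx : 0 ≤ w₁ * y₂ - y₁ * w₂) (hz : 0 ≤ (c - w₁) * y₂ - (c - y₁) * w₂)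
    (hx' : 0 ≤ y₁ ∨ 0 ≤ w₁) (hz' : y₁ ≤ c ∨ w₁ ≤ c) :
    ∃ s ∈ Icc (0 : ℝ) 1, (1 - s) * y₁ + s * w₁ ∈ Icc 0 c ∧ (1 - s) * y₂ + s * w₂ = 0 := by
  rcases (sub_nonneg.2 (hw₂.trans hy₂)).eq_or_lt with h | h
  · have hy₂0 : y₂ = 0 := by linarith
    have hw₂0 : w₂ = 0 := by linarith
    have hp : max 0 (min y₁ w₁) ∈ segment ℝ y₁ w₁ := by
      rw [segment_eq_uIcc]
      exact ⟨le_max_right _ _, max_le (by rcases hx' with h | h <;> simp [h]) min_le_max⟩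
    rw [segment_eq_image] at hp
    obtain ⟨s, hs, hps⟩ := hp
    refine ⟨s, hs, ?_, by simp [hy₂0, hw₂0]⟩
    simp only [smul_eq_mul] at hps
    rw [hps]
    exact ⟨le_max_left _ _, max_le hc (by rcases hz' with h | h <;> simp [h])⟩
  · refine ⟨y₂ / (y₂ - w₂), ⟨by positivity, (div_le_one h).2 (by linarith)⟩, ?_, ?_⟩
    · have hξ : (1 - y₂ / (y₂ - w₂)) * y₁ + y₂ / (y₂ - w₂) * w₁
          = (w₁ * y₂ - y₁ * w₂) / (y₂ - w₂) := by field_simp; ring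
      have hcξ : c - (w₁ * y₂ - y₁ * w₂) / (y₂ - w₂)
          = ((c - w₁) * y₂ - (c - y₁) * w₂) / (y₂ - w₂) := by field_simp; ring
      rw [hξ]
      exact ⟨by positivity, sub_nonneg.1 (hcξ ▸ by positivity)⟩
    · field_simp; ring

def planePt (u v : ℝ) : EuclideanSpace ℝ (Fin 3) := !₂[u, v, 0]

theorem dist_planePt (u v u' v' : ℝ) :
    dist (planePt u v) (planePt u' v') = √((u - u') ^ 2 + (v - v') ^ 2) := by
  simp [planePt, EuclideanSpace.dist_eq, Fin.sum_univ_three, Real.dist_eq, sq_abs]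

theorem smul_planePt_add_smul_planePt (θ u v u' v' : ℝ) :
    (1 - θ) • planePt u v + θ • planePt u' v'
      = planePt ((1 - θ) * u + θ * u') ((1 - θ) * v + θ * v') := by
  ext i; fin_cases i <;> simp [planePt]

theorem dist_planePt_eq {u v u' v' r : ℝ} (hr : 0 ≤ r) (h : (u - u') ^ 2 + (v - v') ^ 2 = r ^ 2) :
    dist (planePt u v) (planePt u' v') = r := by
  rw [dist_planePt, h, sqrt_sq hr]

theorem cos_nonneg_or_cos_nonneg_of_add_le_pi {θ φ : ℝ} (hθ : 0 ≤ θ) (hφ : 0 ≤ φ) (h : θ + φ ≤ π) :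
    0 ≤ cos θ ∨ 0 ≤ cos φ := by
  by_cases hθ' : θ ≤ π / 2
  · exact .inl (cos_nonneg_of_mem_Icc ⟨by linarith, hθ'⟩)
  · exact .inr (cos_nonneg_of_mem_Icc ⟨by linarith, by linarith⟩)

theorem exists_glued_triangles_of_angle_sum_le {a b c e g α β γ δ : ℝ} (ha : 0 ≤ a) (hb : 0 ≤ b) (hc : 0 < c)
    (he : 0 ≤ e) (hg : 0 ≤ g) (hα : 0 ≤ α) (hβ : 0 ≤ β) (hγ : 0 ≤ γ) (hδ : 0 ≤ δ)
    (hαβ : α + β ≤ π) (hγδ : γ + δ ≤ π)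
    (hcosy : a * cos α + b * cos γ = c) (hsiny : b * sin γ = a * sin α)
    (hcosw : e * cos β + g * cos δ = c) (hsinw : g * sin δ = e * sin β) :
    ∃ x' y' z' w' : EuclideanSpace ℝ (Fin 3), dist x' y' = a ∧ dist y' z' = b ∧
      dist z' x' = c ∧ dist x' w' = e ∧ dist w' z' = g ∧
      (segment ℝ y' w' ∩ segment ℝ x' z').Nonempty := by
  have hx : 0 ≤ e * cos β * (a * sin α) - a * cos α * -(e * sin β) := by
    rw [show e * cos β * (a * sin α) - a * cos α * -(e * sin β) = a * e * sin (α + β) by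
      rw [sin_add]; ring]
    exact mul_nonneg (mul_nonneg ha he) (sin_nonneg_of_nonneg_of_le_pi (by linarith) hαβ)
  have hz : 0 ≤ (c - e * cos β) * (a * sin α) - (c - a * cos α) * -(e * sin β) := by
    rw [show (c - e * cos β) * (a * sin α) - (c - a * cos α) * -(e * sin β)
        = b * g * sin (γ + δ) by
      rw [sin_add]
      linear_combination (-(a * sin α)) * hcosw - g * cos δ * hsiny - e * sin β * hcosy
        - b * cos γ * hsinw]
    exact mul_nonneg (mul_nonneg hb hg) (sin_nonneg_of_nonneg_of_le_pi (by linarith) hγδ)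
  have hx' : 0 ≤ a * cos α ∨ 0 ≤ e * cos β :=
    (cos_nonneg_or_cos_nonneg_of_add_le_pi hα hβ hαβ).imp (mul_nonneg ha) (mul_nonneg he)
  have hz' : a * cos α ≤ c ∨ e * cos β ≤ c :=
    (cos_nonneg_or_cos_nonneg_of_add_le_pi hγ hδ hγδ).imp
      (fun h ↦ by nlinarith [mul_nonneg hb h]) (fun h ↦ by nlinarith [mul_nonneg hg h])
  obtain ⟨s, hs, ⟨hξ₀, hξc⟩, hs0⟩ := exists_crossing_of_opposite_sides hc.le
    (mul_nonneg ha (sin_nonneg_of_nonneg_of_le_pi hα (by linarith)))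
    (neg_nonpos.2 (mul_nonneg he (sin_nonneg_of_nonneg_of_le_pi hβ (by linarith)))) hx hz hx' hz'
  refine ⟨planePt 0 0, planePt (a * cos α) (a * sin α), planePt c 0,
    planePt (e * cos β) (-(e * sin β)), ?_, ?_, ?_, ?_, ?_, ?_⟩
  · exact dist_planePt_eq ha (by linear_combination a ^ 2 * sin_sq_add_cos_sq α)
  · exact dist_planePt_eq hb (by
      linear_combination (a * cos α - c - b * cos γ) * hcosy - (b * sin γ + a * sin α) * hsiny
        + b ^ 2 * sin_sq_add_cos_sq γ)
  · exact dist_planePt_eq hc.le (by ring)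
  · exact dist_planePt_eq he (by linear_combination e ^ 2 * sin_sq_add_cos_sq β)
  · exact dist_planePt_eq hg (by
      linear_combination (e * cos β - c - g * cos δ) * hcosw - (g * sin δ + e * sin β) * hsinw
        + g ^ 2 * sin_sq_add_cos_sq δ)
  · refine ⟨planePt ((1 - s) * (a * cos α) + s * (e * cos β)) 0, ?_, ?_⟩ <;>
      rw [segment_eq_image]
    · exact ⟨s, hs, by simp only [smul_planePt_add_smul_planePt, hs0]⟩
    · refine ⟨_ / c, ⟨div_nonneg hξ₀ hc.le, (div_le_one hc).2 hξc⟩, ?_⟩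
      simp only [smul_planePt_add_smul_planePt, div_mul_cancel₀ _ hc.ne', mul_zero, add_zero,
        zero_add]

theorem overDistance_angle_sum_general {X : Type*} [MetricSpace X] (hX : BoxIneq X)
    (x y z w : X)
    (hxy : x ≠ y) (hxz : x ≠ z) (hxw : x ≠ w)
    (hyz : y ≠ z) (hzw : z ≠ w)
    (hod : OverDistance x y z w) :
    Real.pi < compAngle y x z + compAngle z x w ∨
    Real.pi < compAngle y z x + compAngle x z w := by
  by_contra! h
  rw [compAngle_comm z x w, compAngle_comm x z w] at h
  obtain ⟨x', y', z', w', hxy', hyz', hzx', hxw', hwz', hcross⟩ :=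
    exists_glued_triangles_of_angle_sum_le dist_nonneg dist_nonneg (dist_pos.2 hxz) dist_nonneg dist_nonneg
      (compAngle_nonneg ..) (compAngle_nonneg ..) (compAngle_nonneg ..) (compAngle_nonneg ..)
      h.1 h.2 (dist_mul_cos_compAngle_add_dist_mul_cos_compAngle hxy hxz hyz)
      (dist_mul_sin_compAngle_eq hxy hxz hyz)
      (dist_mul_cos_compAngle_add_dist_mul_cos_compAngle hxw hxz hzw.symm)
      (dist_mul_sin_compAngle_eq hxw hxz hzw.symm)
  rw [dist_comm x z] at hzx'
  exact (hod x' y' z' w' hxy' hyz' hzx' hxw' hwz').not_ge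
    (hX.dist_le_of_segment_inter_nonempty hxy' hyz' hzx' hxw' hwz' hcross)

/-- Lemma 6.7: for an over-distance quadruple, one of the two sums of comparison angles
exceeds `π`. -/
theorem overDistance_angle_sum {X : Type*} [MetricSpace X] (hX : BoxIneq X)
    (x y z w : X)
    (hxy : x ≠ y) (hxz : x ≠ z) (hxw : x ≠ w)
    (hyz : y ≠ z) (hyw : y ≠ w) (hzw : z ≠ w)
    (hod : OverDistance x y z w) :
    Real.pi < compAngle y x z + compAngle z x w ∨
    Real.pi < compAngle y z x + compAngle x z w :=
  overDistance_angle_sum_general hX x y z w hxy hxz hxw hyz hzw hod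

end
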